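/- For every school c in a school-choice instance, the joint-seat-allocation choice function C^JSA_c is substitutable: for every set of students S1, every student s ∈ C^JSA_c(S1), and every set S2 with s ∈ S2 ⊆ S1, one has s ∈ C^JSA_c(S2). -/

import Mathlib

/-!
Common formalization of school-choice instances with reserved seats
(minority reserve, joint seat allocation, discovery program).

Conventions:
* `prio c s` is the priority rank of student `s` at school `c`
  (smaller value = higher priority); injectivity encodes a strict priority order.
* `pref s o` is the preference rank of outcome `o : Option C` for student `s`
  (smaller value = more preferred); `none` denotes being unmatched, and a school
  `c` is acceptable to `s` iff `pref s (some c) < pref s none`.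
-/

open Finset

structure SchoolChoice (S C : Type*) [Fintype S] [DecidableEq S] [Fintype C] [DecidableEq C] where
  /-- the set of disadvantaged (minority) students; the rest are advantaged -/
  dis : Finset S
  /-- preference rank of each outcome (school or `none` = unmatched) for each student -/
  pref : S → Option C → ℕ
  pref_inj : ∀ s, Function.Injective (pref s)
  /-- priority rank of each student at each school (lower = higher priority) -/
  prio : C → S → ℕ
  prio_inj : ∀ c, Function.Injective (prio c)
  /-- quota of each school -/
  q : C → ℕ
  /-- reservation quota of each school -/
  qR : C → ℕ
  qR_le : ∀ c, qR c ≤ q c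

namespace SchoolChoice

variable {S C : Type*} [Fintype S] [DecidableEq S] [Fintype C] [DecidableEq C]

/-- `max(T, >_c, k)`: the `min(k, |T|)` highest-priority students of `T` at school `c`. -/
def maxSet (I : SchoolChoice S C) (c : C) (T : Finset S) (k : ℕ) : Finset S :=
  T.filter fun s => (T.filter fun t => I.prio c t < I.prio c s).card < k

/-- baseline choice function `C^BASE_c` -/
def CBASE (I : SchoolChoice S C) (c : C) (T : Finset S) : Finset S :=
  I.maxSet c T (I.q c)

/-- `S1^R` of the minority-reserve choice function -/
def mrRes (I : SchoolChoice S C) (c : C) (T : Finset S) : Finset S :=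
  I.maxSet c (T ∩ I.dis) (I.qR c)

/-- minority-reserve choice function `C^MR_c` -/
def CMR (I : SchoolChoice S C) (c : C) (T : Finset S) : Finset S :=
  I.mrRes c T ∪ I.maxSet c (T \ I.mrRes c T) (I.q c - (I.mrRes c T).card)

/-- `S1^G` of the joint-seat-allocation choice function -/
def jsaGen (I : SchoolChoice S C) (c : C) (T : Finset S) : Finset S :=
  I.maxSet c T (I.q c - I.qR c)

/-- `S1^R` of the joint-seat-allocation choice function -/
def jsaRes (I : SchoolChoice S C) (c : C) (T : Finset S) : Finset S :=
  I.maxSet c ((T ∩ I.dis) \ I.jsaGen c T) (I.qR c)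

/-- joint-seat-allocation choice function `C^JSA_c` -/
def CJSA (I : SchoolChoice S C) (c : C) (T : Finset S) : Finset S :=
  I.jsaGen c T ∪ I.jsaRes c T ∪
    I.maxSet c (T \ (I.jsaGen c T ∪ I.jsaRes c T))
      (I.q c - (I.jsaGen c T ∪ I.jsaRes c T).card)

/-- school `c` is acceptable to student `s` -/
def acceptable (I : SchoolChoice S C) (s : S) (c : C) : Prop :=
  I.pref s (some c) < I.pref s none

/-- `μ(c)`: the set of students assigned to school `c` by `μ` -/
def assigned (I : SchoolChoice S C) (μ : S → Option C) (c : C) : Finset S :=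
  Finset.univ.filter fun s => μ s = some c

/-- `μ` is a matching: students are assigned only acceptable schools, quotas respected -/
def IsMatching (I : SchoolChoice S C) (μ : S → Option C) : Prop :=
  (∀ s c, μ s = some c → I.acceptable s c) ∧ ∀ c, (I.assigned μ c).card ≤ I.q c

/-- `μ` is stable w.r.t. the choice functions `Ch`: it is a matching and no pair
`(s, c)` with `c` acceptable to `s` satisfies `c >_s μ(s)` and `s ∈ Ch c (μ(c) ∪ {s})`. -/
def IsStable (I : SchoolChoice S C) (Ch : C → Finset S → Finset S) (μ : S → Option C) : Prop :=
  I.IsMatching μ ∧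
    ∀ s c, I.acceptable s c → I.pref s (some c) < I.pref s (μ s) →
      s ∉ Ch c (insert s (I.assigned μ c))

/-- `μ` is the student-optimal stable matching w.r.t. `Ch`:
stable and weakly preferred by every student to every stable matching. -/
def IsOptStable (I : SchoolChoice S C) (Ch : C → Finset S → Finset S) (μ : S → Option C) :
    Prop :=
  I.IsStable Ch μ ∧ ∀ μ', I.IsStable Ch μ' → ∀ s, I.pref s (μ s) ≤ I.pref s (μ' s)

/-! Restricted (sub)instances, used by the three-stage discovery program: only students
in `A` participate and school `c` has quota `q' c`, with baseline (responsive) choice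
functions. -/

def IsMatchingOn (I : SchoolChoice S C) (A : Finset S) (q' : C → ℕ) (μ : S → Option C) :
    Prop :=
  (∀ s, s ∉ A → μ s = none) ∧
    (∀ s c, μ s = some c → I.acceptable s c) ∧ ∀ c, (I.assigned μ c).card ≤ q' c

def IsStableOn (I : SchoolChoice S C) (A : Finset S) (q' : C → ℕ) (μ : S → Option C) : Prop :=
  I.IsMatchingOn A q' μ ∧
    ∀ s ∈ A, ∀ c : C, I.acceptable s c → I.pref s (some c) < I.pref s (μ s) →
      s ∉ I.maxSet c (insert s (I.assigned μ c)) (q' c)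

def IsOptStableOn (I : SchoolChoice S C) (A : Finset S) (q' : C → ℕ) (μ : S → Option C) :
    Prop :=
  I.IsStableOn A q' μ ∧
    ∀ μ', I.IsStableOn A q' μ' → ∀ s ∈ A, I.pref s (μ s) ≤ I.pref s (μ' s)

/-- `μ` is the discovery-program matching: the union of the three stage matchings
`μ1` (general seats, all students), `μ2` (reserved seats, unmatched disadvantaged
students), `μ3` (vacant reserved seats, unmatched advantaged students). -/
def IsDisc (I : SchoolChoice S C) (μ : S → Option C) : Prop :=
  ∃ μ1 μ2 μ3 : S → Option C,
    I.IsOptStableOn Finset.univ (fun c => I.q c - I.qR c) μ1 ∧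
    I.IsOptStableOn (I.dis.filter fun s => μ1 s = none) I.qR μ2 ∧
    I.IsOptStableOn ((Finset.univ \ I.dis).filter fun s => μ1 s = none)
      (fun c => I.qR c - (I.assigned μ2 c).card) μ3 ∧
    ∀ s, μ s = Option.elim (μ1 s) (Option.elim (μ2 s) (μ3 s) some) some

/-- `(s, c)` is a blocking pair of `μ` for disadvantaged students -/
def BlockDis (I : SchoolChoice S C) (μ : S → Option C) (s : S) (c : C) : Prop :=
  s ∈ I.dis ∧ I.acceptable s c ∧ I.pref s (some c) < I.pref s (μ s) ∧
    ∃ s' ∈ I.assigned μ c, s' ∈ I.dis ∧ I.prio c s < I.prio c s'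

/-- `(s, c)` is a blocking pair of `μ` for advantaged students -/
def BlockAdv (I : SchoolChoice S C) (μ : S → Option C) (s : S) (c : C) : Prop :=
  s ∉ I.dis ∧ I.acceptable s c ∧ I.pref s (some c) < I.pref s (μ s) ∧
    ∃ s' ∈ I.assigned μ c, s' ∉ I.dis ∧ I.prio c s < I.prio c s'

/-- `(s, c)` is an in-group blocking pair of `μ` -/
def InGroupBlock (I : SchoolChoice S C) (μ : S → Option C) (s : S) (c : C) : Prop :=
  I.BlockDis μ s c ∨ I.BlockAdv μ s c

/-- all schools share a common priority order over the students -/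
def CommonPriority (I : SchoolChoice S C) : Prop :=
  ∀ c c' : C, ∀ t u : S, I.prio c t < I.prio c u ↔ I.prio c' t < I.prio c' u

/-- the reservation quotas are a smart reserve w.r.t. the baseline matching `μBase` -/
def SmartReserve (I : SchoolChoice S C) (μBase : S → Option C) : Prop :=
  ∀ c, (I.assigned μBase c ∩ I.dis).card ≤ I.qR c

end SchoolChoice

namespace SchoolChoice

variable {S C : Type*} [Fintype S] [DecidableEq S] [Fintype C] [DecidableEq C]

lemma mem_maxSet' (I : SchoolChoice S C) (c : C) {T : Finset S} {k : ℕ} {s : S} :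
    s ∈ I.maxSet c T k ↔ s ∈ T ∧ (T.filter fun t => I.prio c t < I.prio c s).card < k :=
  mem_filter

lemma maxSet_subset' (I : SchoolChoice S C) (c : C) {T : Finset S} {k : ℕ} :
    I.maxSet c T k ⊆ T := filter_subset _ _

lemma maxSet_subst' (I : SchoolChoice S C) (c : C) {T1 T2 : Finset S} {k : ℕ} {s : S}
    (h12 : T2 ⊆ T1) (hs : s ∈ I.maxSet c T1 k) (hs2 : s ∈ T2) : s ∈ I.maxSet c T2 k := by
  rw [I.mem_maxSet' c] at hs ⊢
  exact ⟨hs2, lt_of_le_of_lt (card_le_card (filter_subset_filter _ h12)) hs.2⟩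

lemma rho_lt (I : SchoolChoice S C) (c : C) {T : Finset S} {t u : S}
    (ht : t ∈ T) (h : I.prio c t < I.prio c u) :
    (T.filter fun x => I.prio c x < I.prio c t).card <
      (T.filter fun x => I.prio c x < I.prio c u).card := by
  have h0 : t ∉ T.filter fun x => I.prio c x < I.prio c t := by simp
  have hsub : insert t (T.filter fun x => I.prio c x < I.prio c t) ⊆
      T.filter fun x => I.prio c x < I.prio c u := by
    intro x hx
    rcases mem_insert.mp hx with rfl | hx
    · exact mem_filter.mpr ⟨ht, h⟩
    · obtain ⟨hxT, hxt⟩ := mem_filter.mp hx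
      exact mem_filter.mpr ⟨hxT, hxt.trans h⟩
  have hc := card_le_card hsub
  rw [card_insert_of_notMem h0] at hc
  omega

lemma card_maxSet (I : SchoolChoice S C) (c : C) (T : Finset S) (k : ℕ) :
    (I.maxSet c T k).card = min k T.card := by
  apply le_antisymm
  · apply le_min
    · have hle : (I.maxSet c T k).card ≤ (Finset.range k).card := by
        apply card_le_card_of_injOn
          (fun t => (T.filter fun x => I.prio c x < I.prio c t).card)
        · intro t ht
          rw [mem_coe, mem_range]
          exact ((I.mem_maxSet' c).mp ht).2
        · intro t ht u hu heq
          by_contra hne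
          have hpne : I.prio c t ≠ I.prio c u := fun hh => hne (I.prio_inj c hh)
          rcases hpne.lt_or_gt with hlt | hlt
          · exact absurd heq (Nat.ne_of_lt (I.rho_lt c ((I.mem_maxSet' c).mp ht).1 hlt))
          · exact absurd heq.symm (Nat.ne_of_lt (I.rho_lt c ((I.mem_maxSet' c).mp hu).1 hlt))
      simpa using hle
    · exact card_le_card (I.maxSet_subset' c)
  · by_contra hlt
    push_neg at hlt
    have hne : (T \ I.maxSet c T k).Nonempty := by
      rw [sdiff_nonempty]
      intro hsubT
      have := card_le_card hsubT
      omega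
    obtain ⟨t, htmem, htmin⟩ := Finset.exists_min_image _ (I.prio c) hne
    obtain ⟨htT, htnot⟩ := mem_sdiff.mp htmem
    apply htnot
    rw [I.mem_maxSet' c]
    refine ⟨htT, ?_⟩
    have hsubM : (T.filter fun x => I.prio c x < I.prio c t) ⊆ I.maxSet c T k := by
      intro u hu
      obtain ⟨huT, hut⟩ := mem_filter.mp hu
      by_contra hnot
      exact absurd (htmin u (mem_sdiff.mpr ⟨huT, hnot⟩)) (not_le.mpr hut)
    have := card_le_card hsubM
    omega

end SchoolChoice

/-- the joint-seat-allocation choice function is substitutable. -/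
theorem CJSA_substitutable {S C : Type*} [Fintype S] [DecidableEq S] [Fintype C] [DecidableEq C]
    (I : SchoolChoice S C) (c : C) (S1 S2 : Finset S) (s : S)
    (hs : s ∈ I.CJSA c S1) (hs2 : s ∈ S2) (hsub : S2 ⊆ S1) :
    s ∈ I.CJSA c S2 := by
  classical
  -- substitutability of the general-seat stage
  have hG : ∀ t ∈ I.jsaGen c S1, t ∈ S2 → t ∈ I.jsaGen c S2 :=
    fun t h1 h2 => I.maxSet_subst' c hsub h1 h2
  -- the ground set of the reserved stage shrinks
  have hground : ((S2 ∩ I.dis) \ I.jsaGen c S2) ⊆ ((S1 ∩ I.dis) \ I.jsaGen c S1) := by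
    intro t ht
    obtain ⟨ht2, htG⟩ := mem_sdiff.mp ht
    obtain ⟨htS2, htd⟩ := mem_inter.mp ht2
    exact mem_sdiff.mpr ⟨mem_inter.mpr ⟨hsub htS2, htd⟩, fun h => htG (hG t h htS2)⟩
  -- substitutability of the union of the first two stages
  have hA : ∀ t ∈ I.jsaGen c S1 ∪ I.jsaRes c S1, t ∈ S2 →
      t ∈ I.jsaGen c S2 ∪ I.jsaRes c S2 := by
    intro t h1 h2
    rcases mem_union.mp h1 with h | h
    · exact mem_union_left _ (hG t h h2)
    · by_cases hg : t ∈ I.jsaGen c S2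
      · exact mem_union_left _ hg
      · apply mem_union_right
        apply I.maxSet_subst' c hground h
        obtain ⟨ht1, _⟩ := mem_sdiff.mp (I.maxSet_subset' c h)
        exact mem_sdiff.mpr ⟨mem_inter.mpr ⟨h2, (mem_inter.mp ht1).2⟩, hg⟩
  -- disjointness of the first two stages
  have hdisjA1 : Disjoint (I.jsaGen c S1) (I.jsaRes c S1) := by
    rw [Finset.disjoint_left]
    intro t h1 h2
    exact (mem_sdiff.mp (I.maxSet_subset' c h2)).2 h1
  have hdisjA2 : Disjoint (I.jsaGen c S2) (I.jsaRes c S2) := by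
    rw [Finset.disjoint_left]
    intro t h1 h2
    exact (mem_sdiff.mp (I.maxSet_subset' c h2)).2 h1
  -- cardinality comparison of the first two stages
  have hcardA : (I.jsaGen c S2 ∪ I.jsaRes c S2).card ≤
      (I.jsaGen c S1 ∪ I.jsaRes c S1).card := by
    rw [card_union_of_disjoint hdisjA1, card_union_of_disjoint hdisjA2]
    have h1 := card_le_card hsub
    have h2 := card_le_card hground
    simp only [SchoolChoice.jsaGen] at h2
    simp only [SchoolChoice.jsaGen, SchoolChoice.jsaRes, I.card_maxSet c]
    omega
  simp only [SchoolChoice.CJSA] at hs ⊢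
  rcases mem_union.mp hs with h | h
  · exact mem_union_left _ (hA s h hs2)
  · by_cases hsA2 : s ∈ I.jsaGen c S2 ∪ I.jsaRes c S2
    · exact mem_union_left _ hsA2
    apply mem_union_right
    rw [I.mem_maxSet' c] at h ⊢
    obtain ⟨hs1, hn1⟩ := h
    obtain ⟨hsS1, hsA1⟩ := mem_sdiff.mp hs1
    refine ⟨mem_sdiff.mpr ⟨hs2, hsA2⟩, ?_⟩
    set A1 := I.jsaGen c S1 ∪ I.jsaRes c S1 with hA1def
    set A2 := I.jsaGen c S2 ∪ I.jsaRes c S2 with hA2def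
    set F1 := (S1 \ A1).filter (fun t => I.prio c t < I.prio c s) with hF1def
    set F2 := (S2 \ A2).filter (fun t => I.prio c t < I.prio c s) with hF2def
    have hF21 : F2 ⊆ F1 := by
      intro t ht
      obtain ⟨ht2, htp⟩ := mem_filter.mp ht
      obtain ⟨htS2, htA2⟩ := mem_sdiff.mp ht2
      exact mem_filter.mpr ⟨mem_sdiff.mpr ⟨hsub htS2, fun hh => htA2 (hA t hh htS2)⟩, htp⟩
    have hdF1 : Disjoint F1 A1 := by
      rw [disjoint_left]
      intro t ht htA
      exact (mem_sdiff.mp (mem_filter.mp ht).1).2 htA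
    have hdF2 : Disjoint F2 A2 := by
      rw [disjoint_left]
      intro t ht htA
      exact (mem_sdiff.mp (mem_filter.mp ht).1).2 htA
    have key : (F2 ∪ A2).card ≤ (F1 ∪ A1).card := by
      have h1 : (F2 ∪ A2) \ (F1 ∪ A1) ⊆ A2 \ A1 := by
        intro t ht
        obtain ⟨ht2, ht1⟩ := mem_sdiff.mp ht
        rcases mem_union.mp ht2 with hh | hh
        · exact absurd (mem_union_left _ (hF21 hh)) ht1
        · exact mem_sdiff.mpr ⟨hh, fun hhh => ht1 (mem_union_right _ hhh)⟩
      have h2 : A1 \ A2 ⊆ (F1 ∪ A1) \ (F2 ∪ A2) := by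
        intro t ht
        obtain ⟨ht1, ht2⟩ := mem_sdiff.mp ht
        refine mem_sdiff.mpr ⟨mem_union_right _ ht1, ?_⟩
        intro hh
        rcases mem_union.mp hh with hhh | hhh
        · obtain ⟨htS2', htA2'⟩ := mem_sdiff.mp (mem_filter.mp hhh).1
          exact htA2' (hA t ht1 htS2')
        · exact ht2 hhh
      have hc1 := card_le_card h1
      have hc2 := card_le_card h2
      have e1 := card_sdiff_add_card_inter (F2 ∪ A2) (F1 ∪ A1)
      have e2 := card_sdiff_add_card_inter (F1 ∪ A1) (F2 ∪ A2)
      have e3 := card_sdiff_add_card_inter A2 A1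
      have e4 := card_sdiff_add_card_inter A1 A2
      have e5 : (A2 ∩ A1).card = (A1 ∩ A2).card := by rw [inter_comm]
      have e6 : ((F2 ∪ A2) ∩ (F1 ∪ A1)).card = ((F1 ∪ A1) ∩ (F2 ∪ A2)).card := by
        rw [inter_comm]
      omega
    have hx2 : F2.card + A2.card = (F2 ∪ A2).card := (card_union_of_disjoint hdF2).symm
    have hx1 : F1.card + A1.card = (F1 ∪ A1).card := (card_union_of_disjoint hdF1).symm
    omega
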